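/- Let A → B be a ring homomorphism whose set of pseudo-integral closures of A in B is non-empty. Then this set is directed under inclusion, and the integral closure B^ic of A in B is the union of all pseudo-integral closures of A in B. -/

import Mathlib

/-!
Being a pseudo-integral closure is inherited by every larger finite subalgebra `D` of `B^ic`:
`Spec(B^ic) → Spec(D)` is surjective because `B^ic` is integral over `D`, and it is injective
because its composite with `Spec(D) → Spec(C)` is; likewise each residue field map of `D ⊆ B^ic`
is a field map through which the surjective one of `C ⊆ B^ic` factors. Since a finite
subalgebra can be enlarged by finitely many integral elements and stay finite, `C₁ ⊔ C₂` bounds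
two pseudo-integral closures, and `C₀ ⊔ A[b]` is one containing a given `b ∈ B^ic`.
-/

open IsLocalRing in
/-- The induced map on residue fields at a prime `q ⊆ B` and its preimage `φ⁻¹(q) ⊆ A`. -/
noncomputable def residueFieldHom {A B : Type*} [CommRing A] [CommRing B] (φ : A →+* B)
    (q : Ideal B) [q.IsPrime] :
    ResidueField (Localization.AtPrime (q.comap φ)) →+* ResidueField (Localization.AtPrime q) :=
  letI := Localization.isLocalHom_localRingHom (q.comap φ) q φ rfl
  ResidueField.map (Localization.localRingHom (q.comap φ) q φ rfl)

/-- A pseudo-integral closure of `A` in `B`: an `A`-subalgebra `C` of the integral closure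
`B^ic` of `A` in `B` which is finitely generated as an `A`-module and such that
`Spec(B^ic) → Spec(C)` is a bijection inducing isomorphisms on all residue fields. -/
def IsPseudoIntegralClosure {A B : Type*} [CommRing A] [CommRing B] [Algebra A B]
    (C : Subalgebra A B) : Prop :=
  ∃ hle : C ≤ integralClosure A B,
    Module.Finite A C ∧
    Function.Bijective (PrimeSpectrum.comap (Subalgebra.inclusion hle).toRingHom) ∧
    ∀ (q : Ideal (integralClosure A B)) (_ : q.IsPrime),
      letI := ‹q.IsPrime›
      Function.Bijective (residueFieldHom (Subalgebra.inclusion hle).toRingHom q)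

section RingHom

variable {R S T : Type*} [CommRing R] [CommRing S] [CommRing T]

lemma residueFieldHom_comp (f : R →+* S) (g : S →+* T) (q : Ideal T) [q.IsPrime] :
    residueFieldHom (g.comp f) q =
      (residueFieldHom g q).comp (residueFieldHom f (q.comap g)) := by
  unfold residueFieldHom
  rw [← IsLocalRing.ResidueField.map_comp]
  congr 1
  exact Localization.localRingHom_comp _ _ _ _ rfl _ rfl

lemma residueFieldHom_bijective_of_comp (f : R →+* S) (g : S →+* T) (q : Ideal T) [q.IsPrime]
    (h : Function.Bijective (residueFieldHom (g.comp f) q)) :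
    Function.Bijective (residueFieldHom g q) := by
  rw [residueFieldHom_comp] at h
  exact ⟨(residueFieldHom g q).injective, .of_comp h.2⟩

lemma PrimeSpectrum.comap_bijective_of_comp {f : R →+* S} {g : S →+* T} (hg : g.IsIntegral)
    (hg_inj : Function.Injective g) (h : Function.Bijective (PrimeSpectrum.comap (g.comp f))) :
    Function.Bijective (PrimeSpectrum.comap g) := by
  rw [PrimeSpectrum.comap_comp] at h
  exact ⟨.of_comp h.1, hg.comap_surjective hg_inj⟩

end RingHom

lemma Subalgebra.isIntegral_inclusion_integralClosure {A B : Type*} [CommRing A] [CommRing B]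
    [Algebra A B] {D : Subalgebra A B} (hD : D ≤ integralClosure A B) :
    (Subalgebra.inclusion hD).toRingHom.IsIntegral :=
  RingHom.IsIntegral.tower_top (algebraMap A D) _ fun x => integralClosure.isIntegral x

namespace IsPseudoIntegralClosure

variable {A B : Type*} [CommRing A] [CommRing B] [Algebra A B]

lemma of_le {C D : Subalgebra A B} (hC : IsPseudoIntegralClosure C) (hCD : C ≤ D)
    (hD : D ≤ integralClosure A B) [Module.Finite A D] : IsPseudoIntegralClosure D := by
  obtain ⟨hC_le, -, hspec, hres⟩ := hC
  let f := (Subalgebra.inclusion hCD).toRingHom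
  let g := (Subalgebra.inclusion hD).toRingHom
  exact ⟨hD, ‹_›, PrimeSpectrum.comap_bijective_of_comp (f := f)
    (Subalgebra.isIntegral_inclusion_integralClosure hD) (Subalgebra.inclusion_injective hD) hspec,
    fun q _ => residueFieldHom_bijective_of_comp f g q (hres q ‹_›)⟩

lemma sup {C D : Subalgebra A B} (hC : IsPseudoIntegralClosure C)
    (hD : D ≤ integralClosure A B) [Module.Finite A D] : IsPseudoIntegralClosure (C ⊔ D) := by
  obtain ⟨hC_le, _, -, -⟩ := id hC
  have := Subalgebra.finite_sup C D
  exact hC.of_le le_sup_left (sup_le hC_le hD)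

end IsPseudoIntegralClosure

theorem pseudoIntegralClosures_directed_and_union_eq_integralClosure
    {A B : Type*} [CommRing A] [CommRing B] [Algebra A B]
    (h : ∃ C : Subalgebra A B, IsPseudoIntegralClosure C) :
    DirectedOn (· ≤ ·) {C : Subalgebra A B | IsPseudoIntegralClosure C} ∧
      ∀ b : B, b ∈ integralClosure A B ↔
        ∃ C : Subalgebra A B, IsPseudoIntegralClosure C ∧ b ∈ C := by
  obtain ⟨C₀, hC₀⟩ := h
  refine ⟨fun C₁ h₁ C₂ h₂ => ?_, fun b => ⟨fun hb => ?_, fun ⟨C, ⟨hC, _⟩, hb⟩ => hC hb⟩⟩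
  · obtain ⟨hC₂, _, -, -⟩ := h₂
    exact ⟨C₁ ⊔ C₂, h₁.sup hC₂, le_sup_left, le_sup_right⟩
  · have : Module.Finite A (Algebra.adjoin A {b}) :=
      Module.Finite.iff_fg.mpr hb.fg_adjoin_singleton
    exact ⟨C₀ ⊔ Algebra.adjoin A {b},
      hC₀.sup (Algebra.adjoin_le (Set.singleton_subset_iff.mpr hb)),
      Algebra.mem_sup_right (Algebra.subset_adjoin rfl)⟩
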